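/- On the enlarged phase space (with B twice continuously differentiable), let γ be a twice continuously differentiable function of (q, p) only, and define the redefined constraint δ := γ + ∑_i (∂γ/∂p_i) φ_{q^i} − ∑_i (∂γ/∂q^i) φ_{p_i}. Then {δ, φ_{q^j}} = ∑_i (∂²γ/∂q^j∂p_i) φ_{q^i} − ∑_i (∂²γ/∂q^j∂q^i) φ_{p_i} and {δ, φ_{p_j}} = ∑_i (∂²γ/∂p_j∂p_i) φ_{q^i} − ∑_i (∂²γ/∂p_j∂q^i) φ_{p_i}. In particular both brackets are linear combinations of the constraints φ_{q^i}, φ_{p_i} and hence vanish on the constraint surface φ_{q^i} = 0 = φ_{p_i}: the redefined constraint δ is (weakly) first class with respect to the second-class constraints φ_{q^i}, φ_{p_i}. -/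

import Mathlib

/-- The canonical Poisson bracket on the phase space `ℝⁿ × ℝⁿ` with coordinates `(xᵘ; πᵤ)`:
`{f, g} = ∑ᵤ (∂f/∂xᵘ · ∂g/∂πᵤ − ∂f/∂πᵤ · ∂g/∂xᵘ)`. -/
noncomputable def poissonBracket {ι : Type*} [Fintype ι] [DecidableEq ι]
    (f g : ((ι → ℝ) × (ι → ℝ)) → ℝ) (z : (ι → ℝ) × (ι → ℝ)) : ℝ :=
  ∑ μ, (fderiv ℝ f z (Pi.single μ 1, 0) * fderiv ℝ g z (0, Pi.single μ 1)
      - fderiv ℝ f z (0, Pi.single μ 1) * fderiv ℝ g z (Pi.single μ 1, 0))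

/-- Index type of the enlarged configuration space `(q, p, u, v) ∈ ℝᴺ × ℝᴺ × ℝᴬ × ℝ^𝒜`. -/
abbrev EIdx (N A Al : ℕ) := Fin N ⊕ Fin N ⊕ Fin A ⊕ Fin Al

/-- The enlarged phase space: configuration variables `(q, p, u, v)` with conjugate momenta
`(π_q, π_p, π_u, π_v)`. -/
abbrev EPhase (N A Al : ℕ) := (EIdx N A Al → ℝ) × (EIdx N A Al → ℝ)

/-- The `q`-part of an enlarged configuration. -/
def qOf (N A Al : ℕ) (x : EIdx N A Al → ℝ) : Fin N → ℝ := fun i => x (Sum.inl i)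

/-- The `p`-part of an enlarged configuration. -/
def pOf (N A Al : ℕ) (x : EIdx N A Al → ℝ) : Fin N → ℝ := fun i => x (Sum.inr (Sum.inl i))

/-- The `u`-part of an enlarged configuration. -/
def uOf (N A Al : ℕ) (x : EIdx N A Al → ℝ) : Fin A → ℝ := fun a => x (Sum.inr (Sum.inr (Sum.inl a)))

/-- The `v`-part of an enlarged configuration. -/
def vOf (N A Al : ℕ) (x : EIdx N A Al → ℝ) : Fin Al → ℝ := fun α => x (Sum.inr (Sum.inr (Sum.inr α)))

/-- Primary constraint `φ_{qⁱ} = π_{qⁱ} − pᵢ + ∂B/∂qⁱ`. -/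
noncomputable def phiQ (N A Al : ℕ) (B : (Fin N → ℝ) × (Fin N → ℝ) → ℝ) (i : Fin N) :
    EPhase N A Al → ℝ :=
  fun z => z.2 (Sum.inl i) - z.1 (Sum.inr (Sum.inl i))
    + fderiv ℝ B (qOf N A Al z.1, pOf N A Al z.1) (Pi.single i 1, 0)

/-- Primary constraint `φ_{pᵢ} = π_{pᵢ} + ∂B/∂pᵢ`. -/
noncomputable def phiP (N A Al : ℕ) (B : (Fin N → ℝ) × (Fin N → ℝ) → ℝ) (i : Fin N) :
    EPhase N A Al → ℝ :=
  fun z => z.2 (Sum.inr (Sum.inl i))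
    + fderiv ℝ B (qOf N A Al z.1, pOf N A Al z.1) (0, Pi.single i 1)

/-- Primary constraint `φ_{uᵃ} = π_{uᵃ}`. -/
def phiU (N A Al : ℕ) (a : Fin A) : EPhase N A Al → ℝ :=
  fun z => z.2 (Sum.inr (Sum.inr (Sum.inl a)))

/-- Primary constraint `φ_{vᵅ} = π_{vᵅ}`. -/
def phiV (N A Al : ℕ) (α : Fin Al) : EPhase N A Al → ℝ :=
  fun z => z.2 (Sum.inr (Sum.inr (Sum.inr α)))

open ContinuousLinearMap in
noncomputable def W0 (N A Al : ℕ) : ((EIdx N A Al) → ℝ) →L[ℝ] (Fin N → ℝ) × (Fin N → ℝ) :=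
  (pi fun i => proj (Sum.inl i)).prod (pi fun i => proj (Sum.inr (Sum.inl i)))

lemma W0_apply (N A Al : ℕ) (x : EIdx N A Al → ℝ) :
    W0 N A Al x = (qOf N A Al x, pOf N A Al x) := rfl

lemma W0_single_q (N A Al : ℕ) (i : Fin N) :
    W0 N A Al (Pi.single (Sum.inl i : EIdx N A Al) 1) = (Pi.single i 1, 0) := by
  refine Prod.ext ?_ ?_ <;> funext j <;>
    simp [W0, Pi.single_apply, eq_comm]

lemma W0_single_p (N A Al : ℕ) (i : Fin N) :
    W0 N A Al (Pi.single (Sum.inr (Sum.inl i) : EIdx N A Al) 1) = (0, Pi.single i 1) := by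
  refine Prod.ext ?_ ?_ <;> funext j <;>
    simp [W0, Pi.single_apply, eq_comm]

lemma W0_single_u (N A Al : ℕ) (a : Fin A) :
    W0 N A Al (Pi.single (Sum.inr (Sum.inr (Sum.inl a)) : EIdx N A Al) 1) = 0 := by
  refine Prod.ext ?_ ?_ <;> funext j <;> simp [W0, Pi.single_apply]

lemma W0_single_v (N A Al : ℕ) (a : Fin Al) :
    W0 N A Al (Pi.single (Sum.inr (Sum.inr (Sum.inr a)) : EIdx N A Al) 1) = 0 := by
  refine Prod.ext ?_ ?_ <;> funext j <;> simp [W0, Pi.single_apply]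

variable {P : Type*} [NormedAddCommGroup P] [NormedSpace ℝ P]

lemma diff_fderiv {B : P → ℝ} (hB : ContDiff ℝ 2 B) : Differentiable ℝ (fderiv ℝ B) :=
  (hB.fderiv_right (m := 1) (by norm_num)).differentiable one_ne_zero

lemma hasFDerivAt_fderiv_apply {B : P → ℝ} (hB : ContDiff ℝ 2 B) (c : P) (w : P) :
    HasFDerivAt (fun w => fderiv ℝ B w c)
      ((ContinuousLinearMap.apply ℝ ℝ c).comp (fderiv ℝ (fderiv ℝ B) w)) w :=
  (ContinuousLinearMap.apply ℝ ℝ c).hasFDerivAt.comp w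
    ((diff_fderiv hB w).hasFDerivAt)

lemma B2_symm {B : P → ℝ} (hB : ContDiff ℝ 2 B) (w a b : P) :
    fderiv ℝ (fderiv ℝ B) w a b = fderiv ℝ (fderiv ℝ B) w b a :=
  second_derivative_symmetric (fun y => (hB.differentiable two_ne_zero y).hasFDerivAt)
    ((diff_fderiv hB w).hasFDerivAt) a b


open ContinuousLinearMap in
noncomputable def WF (N A Al : ℕ) : (EPhase N A Al) →L[ℝ] (Fin N → ℝ) × (Fin N → ℝ) :=
  (W0 N A Al).comp (fst ℝ _ _)

/-- evaluation of the `x`-coordinate as a CLM -/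
noncomputable def Xc (N A Al : ℕ) (μ : EIdx N A Al) : EPhase N A Al →L[ℝ] ℝ :=
  (ContinuousLinearMap.proj (R := ℝ) (φ := fun _ : EIdx N A Al => ℝ) μ).comp
    (ContinuousLinearMap.fst ℝ (EIdx N A Al → ℝ) (EIdx N A Al → ℝ))

/-- evaluation of the `π`-coordinate as a CLM -/
noncomputable def Pc (N A Al : ℕ) (μ : EIdx N A Al) : EPhase N A Al →L[ℝ] ℝ :=
  (ContinuousLinearMap.proj (R := ℝ) (φ := fun _ : EIdx N A Al => ℝ) μ).comp
    (ContinuousLinearMap.snd ℝ (EIdx N A Al → ℝ) (EIdx N A Al → ℝ))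

@[simp] lemma Xc_apply (N A Al : ℕ) (μ : EIdx N A Al) (z : EPhase N A Al) :
    Xc N A Al μ z = z.1 μ := rfl
@[simp] lemma Pc_apply (N A Al : ℕ) (μ : EIdx N A Al) (z : EPhase N A Al) :
    Pc N A Al μ z = z.2 μ := rfl

section main
variable {N A Al : ℕ} {B : (Fin N → ℝ) × (Fin N → ℝ) → ℝ}

open ContinuousLinearMap

noncomputable def DQ (N A Al : ℕ) (B : (Fin N → ℝ) × (Fin N → ℝ) → ℝ) (i : Fin N)
    (z : EPhase N A Al) : EPhase N A Al →L[ℝ] ℝ :=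
  (Pc N A Al (Sum.inl i) - Xc N A Al (Sum.inr (Sum.inl i)))
  + ((ContinuousLinearMap.apply ℝ ℝ ((Pi.single i 1, 0) : (Fin N → ℝ) × (Fin N → ℝ))).comp
      (fderiv ℝ (fderiv ℝ B) (W0 N A Al z.1))).comp (WF N A Al)

noncomputable def DP (N A Al : ℕ) (B : (Fin N → ℝ) × (Fin N → ℝ) → ℝ) (i : Fin N)
    (z : EPhase N A Al) : EPhase N A Al →L[ℝ] ℝ :=
  Pc N A Al (Sum.inr (Sum.inl i))
  + ((ContinuousLinearMap.apply ℝ ℝ ((0, Pi.single i 1) : (Fin N → ℝ) × (Fin N → ℝ))).comp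
      (fderiv ℝ (fderiv ℝ B) (W0 N A Al z.1))).comp (WF N A Al)

lemma hasFDerivAt_phiQ (hB : ContDiff ℝ 2 B) (i : Fin N) (z : EPhase N A Al) :
    HasFDerivAt (phiQ N A Al B i) (DQ N A Al B i z) z := by
  have h1 : HasFDerivAt (fun z : EPhase N A Al => z.2 (Sum.inl i) - z.1 (Sum.inr (Sum.inl i)))
      (Pc N A Al (Sum.inl i) - Xc N A Al (Sum.inr (Sum.inl i))) z :=
    (Pc N A Al (Sum.inl i) - Xc N A Al (Sum.inr (Sum.inl i))).hasFDerivAt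
  have h2 : HasFDerivAt (fun z : EPhase N A Al =>
        fderiv ℝ B (qOf N A Al z.1, pOf N A Al z.1) (Pi.single i 1, 0))
      (((ContinuousLinearMap.apply ℝ ℝ ((Pi.single i 1, 0) : (Fin N → ℝ) × (Fin N → ℝ))).comp
        (fderiv ℝ (fderiv ℝ B) (W0 N A Al z.1))).comp (WF N A Al)) z := by
    have h := (hasFDerivAt_fderiv_apply hB ((Pi.single i 1, 0) : (Fin N → ℝ) × (Fin N → ℝ))
      (W0 N A Al z.1)).comp z (WF N A Al).hasFDerivAt
    exact h
  exact h1.add h2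

lemma hasFDerivAt_phiP (hB : ContDiff ℝ 2 B) (i : Fin N) (z : EPhase N A Al) :
    HasFDerivAt (phiP N A Al B i) (DP N A Al B i z) z := by
  have h1 : HasFDerivAt (fun z : EPhase N A Al => z.2 (Sum.inr (Sum.inl i)))
      (Pc N A Al (Sum.inr (Sum.inl i))) z := (Pc N A Al (Sum.inr (Sum.inl i))).hasFDerivAt
  have h2 : HasFDerivAt (fun z : EPhase N A Al =>
        fderiv ℝ B (qOf N A Al z.1, pOf N A Al z.1) (0, Pi.single i 1))
      (((ContinuousLinearMap.apply ℝ ℝ ((0, Pi.single i 1) : (Fin N → ℝ) × (Fin N → ℝ))).comp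
        (fderiv ℝ (fderiv ℝ B) (W0 N A Al z.1))).comp (WF N A Al)) z := by
    have h := (hasFDerivAt_fderiv_apply hB ((0, Pi.single i 1) : (Fin N → ℝ) × (Fin N → ℝ))
      (W0 N A Al z.1)).comp z (WF N A Al).hasFDerivAt
    exact h
  exact h1.add h2

lemma DQ_apply (i : Fin N) (z ζ : EPhase N A Al) :
    DQ N A Al B i z ζ = ζ.2 (Sum.inl i) - ζ.1 (Sum.inr (Sum.inl i))
      + fderiv ℝ (fderiv ℝ B) (W0 N A Al z.1) (W0 N A Al ζ.1) (Pi.single i 1, 0) := by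
  simp [DQ, WF]

lemma DP_apply (i : Fin N) (z ζ : EPhase N A Al) :
    DP N A Al B i z ζ = ζ.2 (Sum.inr (Sum.inl i))
      + fderiv ℝ (fderiv ℝ B) (W0 N A Al z.1) (W0 N A Al ζ.1) (0, Pi.single i 1) := by
  simp [DP, WF]


variable {γ : (Fin N → ℝ) × (Fin N → ℝ) → ℝ}

noncomputable def Ddel (N A Al : ℕ) (B γ : (Fin N → ℝ) × (Fin N → ℝ) → ℝ)
    (z : EPhase N A Al) : EPhase N A Al →L[ℝ] ℝ :=
  (fderiv ℝ γ (W0 N A Al z.1)).comp (WF N A Al)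
  + ∑ i, (fderiv ℝ γ (W0 N A Al z.1) (0, Pi.single i 1) • DQ N A Al B i z
      + phiQ N A Al B i z •
        (((ContinuousLinearMap.apply ℝ ℝ ((0, Pi.single i 1) : (Fin N → ℝ) × (Fin N → ℝ))).comp
          (fderiv ℝ (fderiv ℝ γ) (W0 N A Al z.1))).comp (WF N A Al)))
  - ∑ i, (fderiv ℝ γ (W0 N A Al z.1) (Pi.single i 1, 0) • DP N A Al B i z
      + phiP N A Al B i z •
        (((ContinuousLinearMap.apply ℝ ℝ ((Pi.single i 1, 0) : (Fin N → ℝ) × (Fin N → ℝ))).comp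
          (fderiv ℝ (fderiv ℝ γ) (W0 N A Al z.1))).comp (WF N A Al)))

lemma hasFDerivAt_delta (hB : ContDiff ℝ 2 B) (hγ : ContDiff ℝ 2 γ)
    (δ : EPhase N A Al → ℝ)
    (hδ : ∀ z, δ z = γ (qOf N A Al z.1, pOf N A Al z.1)
      + (∑ i, fderiv ℝ γ (qOf N A Al z.1, pOf N A Al z.1) (0, Pi.single i 1)
            * phiQ N A Al B i z)
      - (∑ i, fderiv ℝ γ (qOf N A Al z.1, pOf N A Al z.1) (Pi.single i 1, 0)
            * phiP N A Al B i z)) (z : EPhase N A Al) :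
    HasFDerivAt δ (Ddel N A Al B γ z) z := by
  have hδ' : δ = fun z => γ (qOf N A Al z.1, pOf N A Al z.1)
      + (∑ i, fderiv ℝ γ (qOf N A Al z.1, pOf N A Al z.1) (0, Pi.single i 1)
            * phiQ N A Al B i z)
      - (∑ i, fderiv ℝ γ (qOf N A Al z.1, pOf N A Al z.1) (Pi.single i 1, 0)
            * phiP N A Al B i z) := funext hδ
  rw [hδ']
  have hΓ : HasFDerivAt (fun z : EPhase N A Al => γ (qOf N A Al z.1, pOf N A Al z.1))
      ((fderiv ℝ γ (W0 N A Al z.1)).comp (WF N A Al)) z :=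
    (hγ.differentiable two_ne_zero (W0 N A Al z.1)).hasFDerivAt.comp z (WF N A Al).hasFDerivAt
  have hg : ∀ i : Fin N, HasFDerivAt (fun z : EPhase N A Al =>
        fderiv ℝ γ (qOf N A Al z.1, pOf N A Al z.1) (0, Pi.single i 1))
      (((ContinuousLinearMap.apply ℝ ℝ ((0, Pi.single i 1) : (Fin N → ℝ) × (Fin N → ℝ))).comp
          (fderiv ℝ (fderiv ℝ γ) (W0 N A Al z.1))).comp (WF N A Al)) z := fun i => by
    have h := (hasFDerivAt_fderiv_apply hγ ((0, Pi.single i 1) : (Fin N → ℝ) × (Fin N → ℝ))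
      (W0 N A Al z.1)).comp z (WF N A Al).hasFDerivAt
    exact h
  have hf : ∀ i : Fin N, HasFDerivAt (fun z : EPhase N A Al =>
        fderiv ℝ γ (qOf N A Al z.1, pOf N A Al z.1) (Pi.single i 1, 0))
      (((ContinuousLinearMap.apply ℝ ℝ ((Pi.single i 1, 0) : (Fin N → ℝ) × (Fin N → ℝ))).comp
          (fderiv ℝ (fderiv ℝ γ) (W0 N A Al z.1))).comp (WF N A Al)) z := fun i => by
    have h := (hasFDerivAt_fderiv_apply hγ ((Pi.single i 1, 0) : (Fin N → ℝ) × (Fin N → ℝ))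
      (W0 N A Al z.1)).comp z (WF N A Al).hasFDerivAt
    exact h
  exact (hΓ.add (HasFDerivAt.fun_sum fun i _ => (hg i).mul (hasFDerivAt_phiQ hB i z))).sub
    (HasFDerivAt.fun_sum fun i _ => (hf i).mul (hasFDerivAt_phiP hB i z))

lemma Ddel_apply (z ζ : EPhase N A Al) :
    Ddel N A Al B γ z ζ = fderiv ℝ γ (W0 N A Al z.1) (W0 N A Al ζ.1)
      + ∑ i, (fderiv ℝ γ (W0 N A Al z.1) (0, Pi.single i 1)
              * (ζ.2 (Sum.inl i) - ζ.1 (Sum.inr (Sum.inl i))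
                 + fderiv ℝ (fderiv ℝ B) (W0 N A Al z.1) (W0 N A Al ζ.1) (Pi.single i 1, 0))
            + phiQ N A Al B i z
              * fderiv ℝ (fderiv ℝ γ) (W0 N A Al z.1) (W0 N A Al ζ.1) (0, Pi.single i 1))
      - ∑ i, (fderiv ℝ γ (W0 N A Al z.1) (Pi.single i 1, 0)
              * (ζ.2 (Sum.inr (Sum.inl i))
                 + fderiv ℝ (fderiv ℝ B) (W0 N A Al z.1) (W0 N A Al ζ.1) (0, Pi.single i 1))
            + phiP N A Al B i z
              * fderiv ℝ (fderiv ℝ γ) (W0 N A Al z.1) (W0 N A Al ζ.1) (Pi.single i 1, 0)) := by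
  simp [Ddel, DQ_apply, DP_apply, WF, smul_eq_mul]

set_option maxHeartbeats 1000000 in
lemma bracket_Q (hB : ContDiff ℝ 2 B) (hγ : ContDiff ℝ 2 γ)
    (δ : EPhase N A Al → ℝ)
    (hδ : ∀ z, δ z = γ (qOf N A Al z.1, pOf N A Al z.1)
      + (∑ i, fderiv ℝ γ (qOf N A Al z.1, pOf N A Al z.1) (0, Pi.single i 1)
            * phiQ N A Al B i z)
      - (∑ i, fderiv ℝ γ (qOf N A Al z.1, pOf N A Al z.1) (Pi.single i 1, 0)
            * phiP N A Al B i z)) (j : Fin N) (z : EPhase N A Al) :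
    poissonBracket δ (phiQ N A Al B j) z
      = (∑ i, fderiv ℝ (fderiv ℝ γ) (W0 N A Al z.1) (Pi.single j 1, 0) (0, Pi.single i 1)
            * phiQ N A Al B i z)
      - (∑ i, fderiv ℝ (fderiv ℝ γ) (W0 N A Al z.1) (Pi.single j 1, 0) (Pi.single i 1, 0)
            * phiP N A Al B i z) := by
  unfold poissonBracket
  rw [(hasFDerivAt_delta hB hγ δ hδ z).fderiv, (hasFDerivAt_phiQ hB j z).fderiv]
  simp only [Fintype.sum_sum_type]
  simp only [Ddel_apply, DQ_apply, W0_single_q, W0_single_p, W0_single_u, W0_single_v,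
    map_zero, ContinuousLinearMap.zero_apply, Pi.single_apply, Prod.fst_zero, Prod.snd_zero,
    Pi.zero_apply, mul_ite, mul_one, mul_zero, ite_mul, one_mul, zero_mul, sub_zero, zero_sub,
    zero_add, add_zero, mul_neg, neg_mul, Sum.inl.injEq, Sum.inr.injEq, reduceCtorEq, if_false,
    Finset.sum_ite_eq, Finset.sum_ite_eq', Finset.mem_univ, if_true, Finset.sum_const_zero,
    neg_zero, neg_neg, sub_self]
  have e1 : ∀ x : Fin N, fderiv ℝ (fderiv ℝ B) (W0 N A Al z.1) (Pi.single x 1, 0) (Pi.single j 1, 0)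
      = fderiv ℝ (fderiv ℝ B) (W0 N A Al z.1) (Pi.single j 1, 0) (Pi.single x 1, 0) :=
    fun x => B2_symm hB _ _ _
  have e2 : ∀ x : Fin N, fderiv ℝ (fderiv ℝ B) (W0 N A Al z.1) ((0 : Fin N → ℝ), Pi.single x 1) (Pi.single j 1, 0)
      = fderiv ℝ (fderiv ℝ B) (W0 N A Al z.1) (Pi.single j 1, 0) ((0 : Fin N → ℝ), Pi.single x 1) :=
    fun x => B2_symm hB _ _ _
  rw [Finset.sum_sub_distrib, Finset.sum_ite_eq]
  simp only [Finset.mem_univ, if_true, e1, e2, mul_add, mul_neg, mul_ite, mul_one, mul_zero,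
    Finset.sum_add_distrib, Finset.sum_sub_distrib, Finset.sum_neg_distrib, Finset.sum_ite_eq]
  simp only [mul_comm]
  abel

set_option maxHeartbeats 1000000 in
lemma bracket_P (hB : ContDiff ℝ 2 B) (hγ : ContDiff ℝ 2 γ)
    (δ : EPhase N A Al → ℝ)
    (hδ : ∀ z, δ z = γ (qOf N A Al z.1, pOf N A Al z.1)
      + (∑ i, fderiv ℝ γ (qOf N A Al z.1, pOf N A Al z.1) (0, Pi.single i 1)
            * phiQ N A Al B i z)
      - (∑ i, fderiv ℝ γ (qOf N A Al z.1, pOf N A Al z.1) (Pi.single i 1, 0)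
            * phiP N A Al B i z)) (j : Fin N) (z : EPhase N A Al) :
    poissonBracket δ (phiP N A Al B j) z
      = (∑ i, fderiv ℝ (fderiv ℝ γ) (W0 N A Al z.1) ((0 : Fin N → ℝ), Pi.single j 1) (0, Pi.single i 1)
            * phiQ N A Al B i z)
      - (∑ i, fderiv ℝ (fderiv ℝ γ) (W0 N A Al z.1) ((0 : Fin N → ℝ), Pi.single j 1) (Pi.single i 1, 0)
            * phiP N A Al B i z) := by
  unfold poissonBracket
  rw [(hasFDerivAt_delta hB hγ δ hδ z).fderiv, (hasFDerivAt_phiP hB j z).fderiv]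
  simp only [Fintype.sum_sum_type]
  simp only [Ddel_apply, DP_apply, W0_single_q, W0_single_p, W0_single_u, W0_single_v,
    map_zero, ContinuousLinearMap.zero_apply, Pi.single_apply, Prod.fst_zero, Prod.snd_zero,
    Pi.zero_apply, mul_ite, mul_one, mul_zero, ite_mul, one_mul, zero_mul, sub_zero, zero_sub,
    zero_add, add_zero, mul_neg, neg_mul, Sum.inl.injEq, Sum.inr.injEq, reduceCtorEq, if_false,
    Finset.sum_ite_eq, Finset.sum_ite_eq', Finset.mem_univ, if_true, Finset.sum_const_zero,
    neg_zero, neg_neg, sub_self]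
  have e1 : ∀ x : Fin N, fderiv ℝ (fderiv ℝ B) (W0 N A Al z.1) (Pi.single x 1, 0) ((0 : Fin N → ℝ), Pi.single j 1)
      = fderiv ℝ (fderiv ℝ B) (W0 N A Al z.1) ((0 : Fin N → ℝ), Pi.single j 1) (Pi.single x 1, 0) :=
    fun x => B2_symm hB _ _ _
  have e2 : ∀ x : Fin N, fderiv ℝ (fderiv ℝ B) (W0 N A Al z.1) ((0 : Fin N → ℝ), Pi.single x 1) ((0 : Fin N → ℝ), Pi.single j 1)
      = fderiv ℝ (fderiv ℝ B) (W0 N A Al z.1) ((0 : Fin N → ℝ), Pi.single j 1) ((0 : Fin N → ℝ), Pi.single x 1) :=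
    fun x => B2_symm hB _ _ _
  simp only [e1, e2, mul_add, mul_neg, mul_ite, mul_one, mul_zero,
    Finset.sum_add_distrib, Finset.sum_sub_distrib, Finset.sum_neg_distrib, Finset.sum_ite_eq,
    Finset.sum_ite_eq', Finset.mem_univ, if_true]
  simp only [mul_comm]
  abel

end main

/-- On the enlarged phase space (with `B` of class C²), for a C² function `γ` of
`(q, p)` only, the redefined constraint
`δ = γ + ∑ᵢ (∂γ/∂pᵢ) φ_{qⁱ} − ∑ᵢ (∂γ/∂qⁱ) φ_{pᵢ}` satisfies
`{δ, φ_{qʲ}} = ∑ᵢ (∂²γ/∂qʲ∂pᵢ) φ_{qⁱ} − ∑ᵢ (∂²γ/∂qʲ∂qⁱ) φ_{pᵢ}` and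
`{δ, φ_{pⱼ}} = ∑ᵢ (∂²γ/∂pⱼ∂pᵢ) φ_{qⁱ} − ∑ᵢ (∂²γ/∂pⱼ∂qⁱ) φ_{pᵢ}`; in particular both brackets
vanish on the constraint surface `φ_{qⁱ} = 0 = φ_{pᵢ}`, i.e. `δ` is weakly first class with
respect to the second-class constraints `φ_{qⁱ}, φ_{pᵢ}`. -/
theorem redefined_constraint_weakly_first_class
    (N A Al : ℕ) (B : (Fin N → ℝ) × (Fin N → ℝ) → ℝ) (hB : ContDiff ℝ 2 B)
    (γ : (Fin N → ℝ) × (Fin N → ℝ) → ℝ) (hγ : ContDiff ℝ 2 γ)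
    (δ : EPhase N A Al → ℝ)
    (hδ : ∀ z, δ z = γ (qOf N A Al z.1, pOf N A Al z.1)
      + (∑ i, fderiv ℝ γ (qOf N A Al z.1, pOf N A Al z.1) (0, Pi.single i 1)
            * phiQ N A Al B i z)
      - (∑ i, fderiv ℝ γ (qOf N A Al z.1, pOf N A Al z.1) (Pi.single i 1, 0)
            * phiP N A Al B i z)) :
    (∀ (j : Fin N) (z : EPhase N A Al),
      poissonBracket δ (phiQ N A Al B j) z
        = (∑ i, fderiv ℝ (fun w => fderiv ℝ γ w (0, Pi.single i 1))
              (qOf N A Al z.1, pOf N A Al z.1) (Pi.single j 1, 0) * phiQ N A Al B i z)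
        - (∑ i, fderiv ℝ (fun w => fderiv ℝ γ w (Pi.single i 1, 0))
              (qOf N A Al z.1, pOf N A Al z.1) (Pi.single j 1, 0) * phiP N A Al B i z)) ∧
    (∀ (j : Fin N) (z : EPhase N A Al),
      poissonBracket δ (phiP N A Al B j) z
        = (∑ i, fderiv ℝ (fun w => fderiv ℝ γ w (0, Pi.single i 1))
              (qOf N A Al z.1, pOf N A Al z.1) (0, Pi.single j 1) * phiQ N A Al B i z)
        - (∑ i, fderiv ℝ (fun w => fderiv ℝ γ w (Pi.single i 1, 0))
              (qOf N A Al z.1, pOf N A Al z.1) (0, Pi.single j 1) * phiP N A Al B i z)) ∧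
    (∀ (j : Fin N) (z : EPhase N A Al),
      (∀ i, phiQ N A Al B i z = 0) → (∀ i, phiP N A Al B i z = 0) →
        poissonBracket δ (phiQ N A Al B j) z = 0
        ∧ poissonBracket δ (phiP N A Al B j) z = 0) := by

  have key : ∀ (c d : (Fin N → ℝ) × (Fin N → ℝ)) (w : (Fin N → ℝ) × (Fin N → ℝ)),
      fderiv ℝ (fun w => fderiv ℝ γ w c) w d = fderiv ℝ (fderiv ℝ γ) w d c := fun c d w => by
    rw [(hasFDerivAt_fderiv_apply hγ c w).fderiv]; rfl
  refine ⟨fun j z => ?_, fun j z => ?_, fun j z h1 h2 => ?_⟩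
  · rw [bracket_Q hB hγ δ hδ j z]
    simp only [key, W0_apply]
  · rw [bracket_P hB hγ δ hδ j z]
    simp only [key, W0_apply]
  · constructor
    · rw [bracket_Q hB hγ δ hδ j z]; simp [h1, h2]
    · rw [bracket_P hB hγ δ hδ j z]; simp [h1, h2]
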